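/- Let m ≥ 3, Δ ≥ 1, and 1 ≤ p < m. For f_Δ(x) = |log|x||^Δ · 1_{|x| ≤ 1} on ℝ^m, the L^p norm of the gradient satisfies ‖∇f_Δ‖_p = Δ · ω(m)^{1/p} · Γ(p(Δ-1)+1)^{1/p} / (m-p)^{Δ-1+1/p}, where ω(m) = 2π^{m/2}/Γ(m/2). -/

import Mathlib

/-!
`f_Δ` is radial with profile `φ(r) = |log r|^Δ` on `(0, 1]`, so away from the null set
`{0} ∪ {‖x‖ = 1}` its gradient has norm `|φ'(‖x‖)| = Δ |log ‖x‖|^(Δ-1) / ‖x‖` inside the unit ball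
and `0` outside. Polar coordinates turn `‖∇f_Δ‖_p^p` into `ω(m) ∫₀¹ r^(m-1) |φ'(r)|^p dr`, and the
substitution `r = exp (-t)` turns that into `Δ^p ∫₀^∞ t^(p(Δ-1)) exp (-(m-p) t) dt`, a Gamma integral.
-/

open MeasureTheory Real Set Metric
open scoped ENNReal

section Polar

variable {E : Type*} [NormedAddCommGroup E] [NormedSpace ℝ E] [MeasurableSpace E] [BorelSpace E]
  [Nontrivial E] [FiniteDimensional ℝ E] (μ : Measure E) [μ.IsAddHaarMeasure]

theorem lintegral_fun_norm_addHaar {f : ℝ → ℝ≥0∞} (hf : Measurable f) :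
    ∫⁻ x, f ‖x‖ ∂μ = Module.finrank ℝ E * μ (ball 0 1) *
      ∫⁻ y in Ioi 0, ENNReal.ofReal (y ^ (Module.finrank ℝ E - 1)) * f y := by
  calc
    ∫⁻ x, f ‖x‖ ∂μ = ∫⁻ x : ({(0:E)}ᶜ : Set E), f ‖x.1‖ ∂(μ.comap (↑)) := by
      rw [lintegral_subtype_comap (measurableSet_singleton 0).compl (fun x => f ‖x‖),
        restrict_compl_singleton]
    _ = ∫⁻ x : sphere (0:E) 1 × Ioi (0:ℝ), f x.2
          ∂(μ.toSphere.prod (.volumeIoiPow (Module.finrank ℝ E - 1))) := by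
      simpa using μ.measurePreserving_homeomorphUnitSphereProd.lintegral_comp_emb
        (Homeomorph.measurableEmbedding _) (f ∘ Subtype.val ∘ Prod.snd)
    _ = μ.toSphere univ * ∫⁻ y : Ioi (0:ℝ), f y ∂(.volumeIoiPow (Module.finrank ℝ E - 1)) := by
      refine (lintegral_prod _
        (hf.comp (measurable_subtype_coe.comp measurable_snd)).aemeasurable).trans ?_
      simp [lintegral_const, mul_comm]
    _ = _ := by
      rw [Measure.toSphere_apply_univ, Measure.volumeIoiPow,
        lintegral_withDensity_eq_lintegral_mul _
          (measurable_subtype_coe.pow_const _).ennreal_ofReal (g := fun y : Ioi (0:ℝ) => f y)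
          (hf.comp measurable_subtype_coe)]
      simp only [Pi.mul_apply]
      exact congrArg _ (lintegral_subtype_comap measurableSet_Ioi
        fun y => ENNReal.ofReal (y ^ (Module.finrank ℝ E - 1)) * f y)

theorem eLpNorm_fun_norm_addHaar {g : ℝ → ℝ} (hg : Measurable g) {p : ℝ≥0∞} (hp0 : p ≠ 0)
    (hp : p ≠ ∞) :
    eLpNorm (fun x => g ‖x‖) p μ = (Module.finrank ℝ E * μ (ball 0 1) *
      ∫⁻ y in Ioi 0, ENNReal.ofReal (y ^ (Module.finrank ℝ E - 1)) * ‖g y‖ₑ ^ p.toReal) ^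
        (1 / p.toReal) := by
  rw [eLpNorm_eq_lintegral_rpow_enorm_toReal hp0 hp,
    lintegral_fun_norm_addHaar μ (f := fun y => ‖g y‖ₑ ^ p.toReal) (by fun_prop)]

end Polar

theorem lintegral_Ioi_rpow_mul_exp_neg_mul {a b : ℝ} (ha : -1 < a) (hb : 0 < b) :
    ∫⁻ t in Ioi 0, ENNReal.ofReal (t ^ a * exp (-b * t)) =
      ENNReal.ofReal (b ^ (-(a + 1)) * Gamma (a + 1)) := by
  have key := integral_rpow_mul_exp_neg_mul_rpow one_pos ha hb
  have hint := integrableOn_rpow_mul_exp_neg_mul_rpow ha one_pos hb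
  simp only [rpow_one, div_one, mul_one] at key hint
  rw [← ofReal_integral_eq_lintegral_ofReal hint, key]
  filter_upwards [ae_restrict_mem measurableSet_Ioi] with t ht
  exact mul_nonneg (rpow_nonneg (le_of_lt ht) _) (exp_pos _).le

theorem lintegral_Ioo_rpow_mul_abs_log_rpow {s a : ℝ} (hs : 0 < s) (ha : -1 < a) :
    ∫⁻ y in Ioo 0 1, ENNReal.ofReal (y ^ (s - 1) * |log y| ^ a) =
      ENNReal.ofReal (s ^ (-(a + 1)) * Gamma (a + 1)) := by
  have himage : (fun t => exp (-t)) '' Ioi 0 = Ioo 0 1 := by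
    change (exp ∘ Neg.neg) '' _ = _
    rw [image_comp, image_neg_Ioi, neg_zero, image_exp_Iio, exp_zero]
  have hderiv (t : ℝ) (_ : t ∈ Ioi (0 : ℝ)) :
      HasDerivWithinAt (fun t => exp (-t)) (-exp (-t)) (Ioi 0) t := by
    simpa using ((hasDerivAt_neg t).exp).hasDerivWithinAt
  have hinj : InjOn (fun t => exp (-t)) (Ioi 0) := fun a _ b _ h => by
    simpa using exp_injective h
  rw [← himage, lintegral_image_eq_lintegral_abs_deriv_mul measurableSet_Ioi hderiv hinj,
    ← lintegral_Ioi_rpow_mul_exp_neg_mul ha hs]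
  refine setLIntegral_congr_fun measurableSet_Ioi fun t (ht : 0 < t) => ?_
  rw [← ENNReal.ofReal_mul (abs_nonneg _), abs_neg, abs_of_pos (exp_pos _), log_exp, abs_neg,
    abs_of_pos ht, ← exp_mul, ← mul_assoc, ← exp_add, mul_comm]
  ring_nf

noncomputable def logPowerProfile (Δ r : ℝ) : ℝ := if r ≤ 1 then |log r| ^ Δ else 0

theorem hasDerivAt_logPowerProfile_of_lt_one {Δ r : ℝ} (hr0 : 0 < r) (hr1 : r < 1) :
    HasDerivAt (logPowerProfile Δ) (-(Δ * |log r| ^ (Δ - 1) / r)) r := by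
  have hlog : 0 < -log r := neg_pos.2 (log_neg hr0 hr1)
  have hderiv : HasDerivAt (fun r => (-log r) ^ Δ) (-r⁻¹ * Δ * (-log r) ^ (Δ - 1)) r :=
    (hasDerivAt_log hr0.ne').neg.rpow_const (Or.inl hlog.ne')
  have heq : logPowerProfile Δ =ᶠ[nhds r] fun r => (-log r) ^ Δ := by
    filter_upwards [Ioo_mem_nhds hr0 hr1] with y hy
    rw [logPowerProfile, if_pos hy.2.le, abs_of_neg (log_neg hy.1 hy.2)]
  refine (hderiv.congr_of_eventuallyEq heq).congr_deriv ?_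
  rw [abs_of_neg (neg_pos.1 hlog)]
  field_simp

theorem hasDerivAt_logPowerProfile_of_one_lt {Δ r : ℝ} (hr : 1 < r) :
    HasDerivAt (logPowerProfile Δ) 0 r := by
  refine (hasDerivAt_const r 0).congr_of_eventuallyEq ?_
  filter_upwards [Ioi_mem_nhds hr] with y hy
  rw [logPowerProfile, if_neg (not_le.2 hy)]

theorem norm_fderiv_comp_norm {E : Type*} [NormedAddCommGroup E] [NormedSpace ℝ E]
    [Nontrivial E] {φ : ℝ → ℝ} {φ' : ℝ} {x : E} (hφ : HasDerivAt φ φ' ‖x‖)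
    (hx : DifferentiableAt ℝ (‖·‖) x) :
    ‖fderiv ℝ (fun y => φ ‖y‖) x‖ = |φ'| := by
  change ‖fderiv ℝ (φ ∘ (‖·‖)) x‖ = _
  rw [(hφ.comp_hasFDerivAt x hx.hasFDerivAt).fderiv, norm_smul, norm_fderiv_norm hx, mul_one,
    norm_eq_abs]

theorem ae_norm_fderiv_logPowerProfile_comp_norm {E : Type*} [NormedAddCommGroup E]
    [InnerProductSpace ℝ E] [MeasurableSpace E] [BorelSpace E] [Nontrivial E]
    [FiniteDimensional ℝ E] (μ : Measure E) [μ.IsAddHaarMeasure] {Δ : ℝ} (hΔ : 0 ≤ Δ) :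
    ∀ᵐ x ∂μ, ‖fderiv ℝ (fun y => logPowerProfile Δ ‖y‖) x‖ =
      (Ioo 0 1).indicator (fun r => Δ * |log r| ^ (Δ - 1) / r) ‖x‖ := by
  have hnull : μ (sphere 0 1 ∪ {0}) = 0 :=
    measure_union_null (Measure.addHaar_sphere μ 0 1) (measure_singleton 0)
  filter_upwards [measure_eq_zero_iff_ae_notMem.1 hnull] with x hx
  simp only [mem_union, mem_sphere_zero_iff_norm, mem_singleton_iff, not_or] at hx
  obtain ⟨hx1, hx0⟩ := hx
  have hnorm : DifferentiableAt ℝ (‖·‖) x :=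
    (contDiffAt_norm ℝ hx0).differentiableAt one_ne_zero
  rcases lt_or_gt_of_ne hx1 with hlt | hgt
  · have hpos : 0 < ‖x‖ := norm_pos_iff.2 hx0
    rw [norm_fderiv_comp_norm (hasDerivAt_logPowerProfile_of_lt_one hpos hlt) hnorm, abs_neg,
      indicator_of_mem (show ‖x‖ ∈ Ioo 0 1 from ⟨hpos, hlt⟩), abs_of_nonneg (by positivity)]
  · rw [norm_fderiv_comp_norm (hasDerivAt_logPowerProfile_of_one_lt hgt) hnorm, abs_zero,
      indicator_of_notMem fun h => hgt.not_gt h.2]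

theorem lintegral_Ioi_pow_mul_enorm_indicator_log_rpow {n : ℕ} {Δ p : ℝ} (hΔ : 0 ≤ Δ)
    (hp : 0 < p) (hpn : p < n) (ha : -1 < p * (Δ - 1)) :
    ∫⁻ y in Ioi 0, ENNReal.ofReal (y ^ (n - 1)) *
        ‖(Ioo 0 1).indicator (fun r => Δ * |log r| ^ (Δ - 1) / r) y‖ₑ ^ p =
      ENNReal.ofReal (Δ ^ p * ((n - p) ^ (-(p * (Δ - 1) + 1)) * Gamma (p * (Δ - 1) + 1))) := by
  have hn : 1 ≤ n := Nat.cast_pos.mp (hp.trans hpn)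
  have hsupp : (Function.support fun y => ENNReal.ofReal (y ^ (n - 1)) *
      ‖(Ioo 0 1).indicator (fun r => Δ * |log r| ^ (Δ - 1) / r) y‖ₑ ^ p) ⊆ Ioo 0 1 := by
    intro y hy
    by_contra hy'
    simp [indicator_of_notMem hy', ENNReal.zero_rpow_of_pos hp] at hy
  have hpoint (y : ℝ) (hy : y ∈ Ioo (0 : ℝ) 1) : ENNReal.ofReal (y ^ (n - 1)) *
      ‖(Ioo 0 1).indicator (fun r => Δ * |log r| ^ (Δ - 1) / r) y‖ₑ ^ p =
      ENNReal.ofReal (Δ ^ p) * ENNReal.ofReal (y ^ ((n - p) - 1) * |log y| ^ (p * (Δ - 1))) := by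
    have hy0 := hy.1
    rw [indicator_of_mem hy, enorm_eq_ofReal (by positivity),
      ENNReal.ofReal_rpow_of_nonneg (by positivity) hp.le,
      ← ENNReal.ofReal_mul (by positivity), ← ENNReal.ofReal_mul (by positivity)]
    congr 1
    rw [div_rpow (by positivity) hy0.le, mul_rpow hΔ (by positivity), ← rpow_mul (abs_nonneg _),
      ← rpow_natCast, Nat.cast_sub hn, rpow_sub hy0, rpow_sub hy0, rpow_sub hy0, Nat.cast_one,
      rpow_one, rpow_natCast, mul_comm (Δ - 1)]
    field_simp
  rw [setLIntegral_eq_of_support_subset (hsupp.trans Ioo_subset_Ioi_self),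
    ← setLIntegral_eq_of_support_subset hsupp, setLIntegral_congr_fun measurableSet_Ioo hpoint,
    lintegral_const_mul' _ _ ENNReal.ofReal_ne_top,
    lintegral_Ioo_rpow_mul_abs_log_rpow (by linarith) ha, ← ENNReal.ofReal_mul (by positivity)]

theorem finrank_mul_volume_ball_one {E : Type*} [NormedAddCommGroup E] [InnerProductSpace ℝ E]
    [FiniteDimensional ℝ E] [MeasurableSpace E] [BorelSpace E] [Nontrivial E] :
    Module.finrank ℝ E * volume (ball (0 : E) 1) = ENNReal.ofReal
      (2 * π ^ ((Module.finrank ℝ E : ℝ) / 2) / Gamma ((Module.finrank ℝ E : ℝ) / 2)) := by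
  have hn : (0 : ℝ) < Module.finrank ℝ E := Nat.cast_pos.2 Module.finrank_pos
  rw [InnerProductSpace.volume_ball, ENNReal.ofReal_one, one_pow, one_mul,
    ← ENNReal.ofReal_natCast, ← ENNReal.ofReal_mul (Nat.cast_nonneg _),
    Gamma_add_one (by positivity), sqrt_eq_rpow, ← rpow_natCast, ← rpow_mul pi_pos.le]
  congr 1
  field_simp

theorem ofReal_mul_ofReal_rpow_one_div_eq {ω Δ G c p : ℝ} (hω : 0 ≤ ω) (hΔ : 0 ≤ Δ) (hG : 0 ≤ G)
    (hc : 0 < c) (hp : 0 < p) :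
    (ENNReal.ofReal ω * ENNReal.ofReal (Δ ^ p * (c ^ (-(p * (Δ - 1) + 1)) * G))) ^ (1 / p) =
      ENNReal.ofReal (Δ * ω ^ (1 / p) * G ^ (1 / p) / c ^ (Δ - 1 + 1 / p)) := by
  rw [← ENNReal.ofReal_mul hω, ENNReal.ofReal_rpow_of_nonneg (by positivity) (by positivity)]
  congr 1
  rw [mul_rpow hω (by positivity), mul_rpow (by positivity) (by positivity),
    mul_rpow (by positivity) hG, ← rpow_mul hΔ, ← rpow_mul hc.le,
    show -(p * (Δ - 1) + 1) * (1 / p) = -(Δ - 1 + 1 / p) by field_simp, rpow_neg hc.le,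
    mul_one_div_cancel hp.ne', rpow_one]
  ring

theorem lp_norm_gradient_log_power_general (m : ℕ) (Δ p : ℝ)
    (hΔ : 1 ≤ Δ) (hp1 : 1 ≤ p) (hpm : p < m) :
    eLpNorm (fun x : EuclideanSpace ℝ (Fin m) =>
        ‖fderiv ℝ (fun y : EuclideanSpace ℝ (Fin m) =>
          if ‖y‖ ≤ 1 then |Real.log ‖y‖| ^ Δ else 0) x‖) (ENNReal.ofReal p) volume
      = ENNReal.ofReal
          (Δ * (2 * Real.pi ^ ((m : ℝ) / 2) / Real.Gamma ((m : ℝ) / 2)) ^ (1 / p) *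
            Real.Gamma (p * (Δ - 1) + 1) ^ (1 / p) / ((m : ℝ) - p) ^ (Δ - 1 + 1 / p)) := by
  have hp : 0 < p := by linarith
  have : Nonempty (Fin m) := ⟨⟨0, Nat.cast_pos.mp (hp.trans hpm)⟩⟩
  have ha : 0 ≤ p * (Δ - 1) := mul_nonneg hp.le (by linarith)
  calc _ = eLpNorm (fun x : EuclideanSpace ℝ (Fin m) =>
        (Ioo 0 1).indicator (fun r => Δ * |log r| ^ (Δ - 1) / r) ‖x‖) (ENNReal.ofReal p) volume :=
        eLpNorm_congr_ae (ae_norm_fderiv_logPowerProfile_comp_norm volume (by linarith))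
    _ = (ENNReal.ofReal (2 * π ^ ((m : ℝ) / 2) / Gamma ((m : ℝ) / 2)) *
        ENNReal.ofReal (Δ ^ p * ((m - p) ^ (-(p * (Δ - 1) + 1)) * Gamma (p * (Δ - 1) + 1)))) ^
          (1 / p) := by
      rw [eLpNorm_fun_norm_addHaar volume ((by fun_prop : Measurable _).indicator measurableSet_Ioo)
        (by simpa using hp) ENNReal.ofReal_ne_top,
        ENNReal.toReal_ofReal hp.le, finrank_mul_volume_ball_one, finrank_euclideanSpace_fin,
        lintegral_Ioi_pow_mul_enorm_indicator_log_rpow (by linarith) hp hpm (by linarith)]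
    _ = _ := ofReal_mul_ofReal_rpow_one_div_eq (by positivity) (by linarith)
        (Gamma_nonneg_of_nonneg (by linarith)) (by linarith) hp

theorem lp_norm_gradient_log_power (m : ℕ) (hm : 3 ≤ m) (Δ p : ℝ)
    (hΔ : 1 ≤ Δ) (hp1 : 1 ≤ p) (hpm : p < m) :
    eLpNorm (fun x : EuclideanSpace ℝ (Fin m) =>
        ‖fderiv ℝ (fun y : EuclideanSpace ℝ (Fin m) =>
          if ‖y‖ ≤ 1 then |Real.log ‖y‖| ^ Δ else 0) x‖) (ENNReal.ofReal p) volume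
      = ENNReal.ofReal
          (Δ * (2 * Real.pi ^ ((m : ℝ) / 2) / Real.Gamma ((m : ℝ) / 2)) ^ (1 / p) *
            Real.Gamma (p * (Δ - 1) + 1) ^ (1 / p) / ((m : ℝ) - p) ^ (Δ - 1 + 1 / p)) :=
  lp_norm_gradient_log_power_general m Δ p hΔ hp1 hpm
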